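/- Let a1, c, mu0, mu1 > 0, b ∈ ℝ, and 0 < σ < 2c/a1. Set E = 4·a1³·mu1⁴·σ − 4·a1²·b·mu1³·σ − a1²·mu0²·mu1² − 4·a1²·mu0·mu1²·σ + 8·a1²·mu1²·σ + 2·a1·b·mu0·mu1 − 4·a1·b·mu1·σ − 4·a1·mu0·σ + 4·a1·σ − b², and assume E·(a1·σ − c) > 0. Define B = (a1·mu0·mu1 − b)/(2·a1·σ·(a1·mu1² + 1)), ω = −((a1·mu1²·σ − b·mu1 − mu0 + σ)·mu1)/(a1·mu1² + 1), λ = √(E/(16·a1·σ·(a1·mu1² + 1)²·(a1·σ − c))), d2 = 3·√(2c − a1·σ)·E/(8·√(a1·σ)·(a1·mu1² + 1)²·(a1·σ − c)), h2 = 3·E/(8·(a1·mu1² + 1)²·(a1·σ − c)), and h0 = −(−8·a1⁴·mu1⁴·σ³ + 8·a1⁴·mu1⁴·σ² + 8·a1³·c·mu1⁴·σ² − 16·a1³·mu1²·σ³ − 8·a1²·b·c·mu1³·σ + 16·a1³·mu1²·σ² − 2·a1²·c·mu0²·mu1² − 8·a1²·c·mu0·mu1²·σ + 16·a1²·c·mu1²·σ²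 − 8·a1²·σ³ + 4·a1·b·c·mu0·mu1 − 8·a1·b·c·mu1·σ + 8·a1²·σ² − 8·a1·c·mu0·σ + 8·a1·c·σ² − 2·b²·c)/(8·a1·σ·(a1·mu1² + 1)²·(a1·σ − c)). Then f(ξ) = d2·sech²(λ·ξ) and g(ξ) = h0 + h2·sech²(λ·ξ) satisfy the Schrödinger BBM–KdV associated ODE system with parameters a1, c, mu0, mu1, b, wave speed σ, and phase shifts B, ω. -/

import Mathlib

/-!
Put `S ξ = sech² (λ ξ)`. Since `tanh² = 1 - S`, one has `S' = -2λ tanh(λξ) S`,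
`S'' = λ² (4 S - 6 S²)` and `S''' = λ² (4 - 12 S) S'`. Substituting `f = d₂ S`, `g = h₀ + h₂ S`,
each equation of the system becomes a polynomial in `S` of degree two (times `S'` for the first
and third), so it holds as soon as two coefficient identities hold. Once `λ²` and `d₂²` are written
without square roots (their radicands are nonnegative because `E (a₁σ - c) > 0` and
`a₁σ < 2c`), these six identities are rational identities in the parameters.
-/

open Real

noncomputable def sechSq (l y : ℝ) : ℝ := (1 / cosh (l * y)) ^ 2

lemma tanh_sq_add_sechSq (l y : ℝ) : tanh (l * y) ^ 2 + sechSq l y = 1 := by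
  have := (cosh_pos (l * y)).ne'
  rw [sechSq, tanh_eq_sinh_div_cosh]
  field_simp
  linear_combination -(cosh_sq (l * y))

lemma hasDerivAt_tanh_const_mul (l x : ℝ) :
    HasDerivAt (fun y => tanh (l * y)) (l * sechSq l x) x := by
  have hl : HasDerivAt (fun y => l * y) l x := by simpa using (hasDerivAt_id x).const_mul l
  have h : HasDerivAt (fun y => sinh (l * y) / cosh (l * y)) _ x :=
    hl.sinh.div hl.cosh (cosh_pos _).ne'
  simp only [tanh_eq_sinh_div_cosh]
  refine h.congr_deriv ?_
  have := (cosh_pos (l * x)).ne'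
  unfold sechSq
  field_simp
  linear_combination l * cosh_sq (l * x)

lemma hasDerivAt_sechSq (l x : ℝ) :
    HasDerivAt (sechSq l) (-2 * l * tanh (l * x) * sechSq l x) x := by
  have hl : HasDerivAt (fun y => l * y) l x := by simpa using (hasDerivAt_id x).const_mul l
  have h : HasDerivAt (fun y => (1 / cosh (l * y)) ^ 2) _ x :=
    ((hasDerivAt_const x 1).div hl.cosh (cosh_pos _).ne').pow 2
  refine h.congr_deriv ?_
  have := (cosh_pos (l * x)).ne'
  unfold sechSq
  norm_num [tanh_eq_sinh_div_cosh]
  field_simp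

lemma deriv_sechSq (l : ℝ) :
    deriv (sechSq l) = fun y => -2 * l * tanh (l * y) * sechSq l y :=
  funext fun x => (hasDerivAt_sechSq l x).deriv

lemma iteratedDeriv_two_sechSq (l : ℝ) :
    iteratedDeriv 2 (sechSq l) = fun y => l ^ 2 * (4 * sechSq l y - 6 * sechSq l y ^ 2) := by
  rw [iteratedDeriv_succ, iteratedDeriv_one, deriv_sechSq]
  funext x
  have h := ((hasDerivAt_tanh_const_mul l x).const_mul (-2 * l)).mul (hasDerivAt_sechSq l x)
  refine h.deriv.trans ?_
  linear_combination 4 * l ^ 2 * sechSq l x * tanh_sq_add_sechSq l x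

lemma iteratedDeriv_three_sechSq (l : ℝ) :
    iteratedDeriv 3 (sechSq l) = fun y =>
      l ^ 2 * (4 - 12 * sechSq l y) * (-2 * l * tanh (l * y) * sechSq l y) := by
  rw [iteratedDeriv_succ, iteratedDeriv_two_sechSq]
  funext x
  have h := hasDerivAt_sechSq l x
  refine (((h.const_mul 4).sub ((h.pow 2).const_mul 6)).const_mul (l ^ 2)).deriv.trans ?_
  ring

section SechSqAnsatz

variable {f g : ℝ → ℝ} {l d h0 h : ℝ}

lemma sechSq_ansatz_first {α κ : ℝ} (hf : f = fun y => d * sechSq l y)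
    (hg : g = fun y => h0 + h * sechSq l y) (h_lin : h0 + κ + 4 * α * l ^ 2 = 0)
    (h_quad : h = 6 * α * l ^ 2) (ξ : ℝ) :
    deriv f ξ * g ξ + f ξ * deriv g ξ + α * iteratedDeriv 3 f ξ + κ * deriv f ξ = 0 := by
  subst hf hg
  simp only [deriv_const_add', deriv_const_mul_field', iteratedDeriv_const_mul_field,
    deriv_sechSq, iteratedDeriv_three_sechSq]
  linear_combination (-2 * l * d * tanh (l * ξ) * sechSq l ξ) * (h_lin + 2 * sechSq l ξ * h_quad)

lemma sechSq_ansatz_second {β P Q : ℝ} (hf : f = fun y => d * sechSq l y)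
    (hg : g = fun y => h0 + h * sechSq l y) (h_lin : β * h0 + 4 * P * l ^ 2 + Q = 0)
    (h_quad : β * h = 6 * P * l ^ 2) (ξ : ℝ) :
    β * f ξ * g ξ + P * iteratedDeriv 2 f ξ + Q * f ξ = 0 := by
  subst hf hg
  simp only [iteratedDeriv_const_mul_field, iteratedDeriv_two_sechSq]
  linear_combination d * sechSq l ξ * h_lin + d * sechSq l ξ ^ 2 * h_quad

lemma sechSq_ansatz_third {ν : ℝ} (c : ℝ) (hf : f = fun y => d * sechSq l y)
    (hg : g = fun y => h0 + h * sechSq l y) (h_lin : h0 + 4 * c * l ^ 2 + ν = 0)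
    (h_quad : d ^ 2 + h ^ 2 = 12 * c * l ^ 2 * h) (ξ : ℝ) :
    f ξ * deriv f ξ + g ξ * deriv g ξ + c * iteratedDeriv 3 g ξ + ν * deriv g ξ = 0 := by
  subst hf hg
  simp only [deriv_const_add', deriv_const_mul_field', iteratedDeriv_const_add three_pos,
    iteratedDeriv_const_mul_field, deriv_sechSq, iteratedDeriv_three_sechSq]
  linear_combination (-2 * l * tanh (l * ξ) * sechSq l ξ) * (h * h_lin + sechSq l ξ * h_quad)

end SechSqAnsatz

theorem stmt_10_general
    (a1 c mu0 mu1 b : ℝ)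
    (ha1 : 0 < a1)
    (σ : ℝ) (hσ : 0 < σ) (hσlt : σ < 2*c/a1)
    (E : ℝ) (hE : E = 4*a1^3*mu1^4*σ - 4*a1^2*b*mu1^3*σ - a1^2*mu0^2*mu1^2 - 4*a1^2*mu0*mu1^2*σ + 8*a1^2*mu1^2*σ + 2*a1*b*mu0*mu1 - 4*a1*b*mu1*σ - 4*a1*mu0*σ + 4*a1*σ - b^2) (hEsgn : E * (a1*σ - c) > 0)
    (B ω lam d2 h2 h0 : ℝ)
    (h_B : B = (a1*mu0*mu1 - b)/(2*a1*σ*(a1*mu1^2 + 1)))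
    (h_ω : ω = -((a1*mu1^2*σ - b*mu1 - mu0 + σ)*mu1)/(a1*mu1^2 + 1))
    (h_lam : lam = Real.sqrt (E/(16*a1*σ*(a1*mu1^2 + 1)^2*(a1*σ - c))))
    (h_d2 : d2 = 3*Real.sqrt (2*c - a1*σ)*E/(8*Real.sqrt (a1*σ)*(a1*mu1^2 + 1)^2*(a1*σ - c)))
    (h_h2 : h2 = 3*E/(8*(a1*mu1^2 + 1)^2*(a1*σ - c)))
    (h_h0 : h0 = -(-8*a1^4*mu1^4*σ^3 + 8*a1^4*mu1^4*σ^2 + 8*a1^3*c*mu1^4*σ^2 - 16*a1^3*mu1^2*σ^3 - 8*a1^2*b*c*mu1^3*σ + 16*a1^3*mu1^2*σ^2 - 2*a1^2*c*mu0^2*mu1^2 - 8*a1^2*c*mu0*mu1^2*σ + 16*a1^2*c*mu1^2*σ^2 - 8*a1^2*σ^3 + 4*a1*b*c*mu0*mu1 - 8*a1*b*c*mu1*σ + 8*a1^2*σ^2 - 8*a1*c*mu0*σ + 8*a1*c*σ^2 - 2*b^2*c)/(8*a1*σ*(a1*mu1^2 + 1)^2*(a1*σ - c)))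
    (f g : ℝ → ℝ)
    (hfdef : ∀ ξ : ℝ, f ξ = d2 * (1/Real.cosh (lam*ξ))^2)
    (hgdef : ∀ ξ : ℝ, g ξ = h0 + h2 * (1/Real.cosh (lam*ξ))^2) :
    ∀ ξ : ℝ,
      (deriv f ξ * g ξ + f ξ * deriv g ξ + a1*σ * iteratedDeriv 3 f ξ + (mu0 + 2*a1*B*ω - 3*a1*B^2*σ - σ - 2*b*B) * deriv f ξ = 0) ∧
      ((B + mu1) * f ξ * g ξ + (3*a1*B*σ + b - a1*ω) * iteratedDeriv 2 f ξ + (ω + B*mu0 + a1*B^2*ω - a1*B^3*σ - B*σ - b*B^2) * f ξ = 0) ∧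
      (f ξ * deriv f ξ + g ξ * deriv g ξ + c * iteratedDeriv 3 g ξ + (1 - σ) * deriv g ξ = 0) := by
  have hac : a1*σ - c ≠ 0 := by rintro h; simp [h] at hEsgn
  have hσc : 0 ≤ 2*c - a1*σ := by rw [lt_div_iff₀ ha1] at hσlt; linarith
  have hlam : lam^2 = E/(16*a1*σ*(a1*mu1^2 + 1)^2*(a1*σ - c)) := by
    have hEac : 0 < E/(a1*σ - c) := div_pos_iff.mpr (mul_pos_iff.mp hEsgn)
    rw [h_lam, Real.sq_sqrt]
    rw [mul_comm _ (a1*σ - c), ← div_div]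
    positivity
  have hd2 : d2^2 = 9*(2*c - a1*σ)*E^2/(64*(a1*σ)*(a1*mu1^2 + 1)^4*(a1*σ - c)^2) := by
    simp only [h_d2, div_pow, mul_pow, Real.sq_sqrt hσc, Real.sq_sqrt (by positivity : 0 ≤ a1*σ)]
    ring
  have hf : f = fun y => d2 * sechSq lam y := funext hfdef
  have hg : g = fun y => h0 + h2 * sechSq lam y := funext hgdef
  subst h_B h_ω h_h0 h_h2 hE
  refine fun ξ => ⟨sechSq_ansatz_first hf hg ?_ ?_ ξ, sechSq_ansatz_second hf hg ?_ ?_ ξ,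
    sechSq_ansatz_third c hf hg ?_ ?_ ξ⟩
  all_goals
    rw [hlam]
    try rw [hd2]
    field_simp
    ring

theorem stmt_10
    (a1 c mu0 mu1 b : ℝ)
    (ha1 : 0 < a1) (hc : 0 < c) (hmu0 : 0 < mu0) (hmu1 : 0 < mu1)
    (σ : ℝ) (hσ : 0 < σ) (hσlt : σ < 2*c/a1)
    (E : ℝ) (hE : E = 4*a1^3*mu1^4*σ - 4*a1^2*b*mu1^3*σ - a1^2*mu0^2*mu1^2 - 4*a1^2*mu0*mu1^2*σ + 8*a1^2*mu1^2*σ + 2*a1*b*mu0*mu1 - 4*a1*b*mu1*σ - 4*a1*mu0*σ + 4*a1*σ - b^2) (hEsgn : E * (a1*σ - c) > 0)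
    (B ω lam d2 h2 h0 : ℝ)
    (h_B : B = (a1*mu0*mu1 - b)/(2*a1*σ*(a1*mu1^2 + 1)))
    (h_ω : ω = -((a1*mu1^2*σ - b*mu1 - mu0 + σ)*mu1)/(a1*mu1^2 + 1))
    (h_lam : lam = Real.sqrt (E/(16*a1*σ*(a1*mu1^2 + 1)^2*(a1*σ - c))))
    (h_d2 : d2 = 3*Real.sqrt (2*c - a1*σ)*E/(8*Real.sqrt (a1*σ)*(a1*mu1^2 + 1)^2*(a1*σ - c)))
    (h_h2 : h2 = 3*E/(8*(a1*mu1^2 + 1)^2*(a1*σ - c)))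
    (h_h0 : h0 = -(-8*a1^4*mu1^4*σ^3 + 8*a1^4*mu1^4*σ^2 + 8*a1^3*c*mu1^4*σ^2 - 16*a1^3*mu1^2*σ^3 - 8*a1^2*b*c*mu1^3*σ + 16*a1^3*mu1^2*σ^2 - 2*a1^2*c*mu0^2*mu1^2 - 8*a1^2*c*mu0*mu1^2*σ + 16*a1^2*c*mu1^2*σ^2 - 8*a1^2*σ^3 + 4*a1*b*c*mu0*mu1 - 8*a1*b*c*mu1*σ + 8*a1^2*σ^2 - 8*a1*c*mu0*σ + 8*a1*c*σ^2 - 2*b^2*c)/(8*a1*σ*(a1*mu1^2 + 1)^2*(a1*σ - c)))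
    (f g : ℝ → ℝ)
    (hfdef : ∀ ξ : ℝ, f ξ = d2 * (1/Real.cosh (lam*ξ))^2)
    (hgdef : ∀ ξ : ℝ, g ξ = h0 + h2 * (1/Real.cosh (lam*ξ))^2) :
    ∀ ξ : ℝ,
      (deriv f ξ * g ξ + f ξ * deriv g ξ + a1*σ * iteratedDeriv 3 f ξ + (mu0 + 2*a1*B*ω - 3*a1*B^2*σ - σ - 2*b*B) * deriv f ξ = 0) ∧
      ((B + mu1) * f ξ * g ξ + (3*a1*B*σ + b - a1*ω) * iteratedDeriv 2 f ξ + (ω + B*mu0 + a1*B^2*ω - a1*B^3*σ - B*σ - b*B^2) * f ξ = 0) ∧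
      (f ξ * deriv f ξ + g ξ * deriv g ξ + c * iteratedDeriv 3 g ξ + (1 - σ) * deriv g ξ = 0) :=
  stmt_10_general a1 c mu0 mu1 b ha1 σ hσ hσlt E hE hEsgn B ω lam d2 h2 h0 h_B h_ω h_lam h_d2 h_h2
    h_h0 f g hfdef hgdef
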